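/- arXiv:1510.03045 — 4 statements merged into one kernel-verified Lean document; each statement's English description precedes it below -/
import Mathlib

section
/- If n > 2 and either d > 2 or n is odd, then a deterministic strategy g is optimal if and only if g satisfies Property 1, i.e., for every index j : Fin n the map y ↦ g y j is injective. -/
open Finset

/-- Similarity: number of positions where two strings agree. -/
def Sim (n d : ℕ) (z x : Fin n → Fin d) : ℕ :=
  (Finset.univ.filter fun j => z j = x j).card

/-- Best approximation of a word `x` by the rows of strategy `g`. -/
def maxSim (n d : ℕ) (g : Fin d → Fin n → Fin d) (x : Fin n → Fin d) : ℕ :=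
  Finset.univ.sup fun y => Sim n d (g y) x

/-- Value (average success probability) of a strategy, assuming Alice's
optimal encoding. -/
def Value (n d : ℕ) (g : Fin d → Fin n → Fin d) : ℚ :=
  (∑ x : Fin n → Fin d, (maxSim n d g x : ℚ)) / (n * d ^ n)

/-- A strategy is optimal if no strategy has a larger value. -/
def IsOptimal (n d : ℕ) (g : Fin d → Fin n → Fin d) : Prop :=
  ∀ f : Fin d → Fin n → Fin d, Value n d f ≤ Value n d g

/-- Property 1: every column of the decoding matrix is injective. -/
def Property1 (n d : ℕ) (g : Fin d → Fin n → Fin d) : Prop :=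
  ∀ j : Fin n, Function.Injective fun y => g y j

/-- Property 2: at most one column of the decoding matrix fails to be injective. -/
def Property2 (n d : ℕ) (g : Fin d → Fin n → Fin d) : Prop :=
  ∀ j₁ j₂ : Fin n, ¬ Function.Injective (fun y => g y j₁) →
    ¬ Function.Injective (fun y => g y j₂) → j₁ = j₂

/-!
Fix a column `j₀` and split each word into its letter `a` at `j₀` and the rest `x`. Summing the
maximum over rows first over `a`, the total similarity becomes `∑ₓ (d · M x + #(c '' A x))`,
where `M x` is the best agreement of a row with `x` off `j₀`, `A x` is the set of rows attaining
it and `c` is column `j₀`. Replacing `c` by the identity column can only increase this, and keeps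
it fixed when `c` is injective; column by column, the strategy `g y j = y` is therefore optimal,
and so is every strategy with Property 1. If `c` identifies two rows `y₁ ≠ y₂`, first replace all
other columns by the identity: then `A x` is the set of most frequent letters of `x`, and a word
of length `n - 1` in which `y₁` and `y₂` are both most frequent (which exists when `n - 1 ≥ 2` is
even or a third letter is available) makes the inequality strict.
-/

section Maximizers

variable {α β : Type*} [Fintype β]

def maximizers (R : β → ℕ) : Finset β := {y | R y = univ.sup R}

lemma mem_maximizers_iff {R : β → ℕ} {y : β} : y ∈ maximizers R ↔ ∀ z, R z ≤ R y := by
  simp only [maximizers, mem_filter, mem_univ, true_and]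
  exact ⟨fun h z => h ▸ le_sup (mem_univ z),
    fun h => le_antisymm (le_sup (mem_univ y)) (Finset.sup_le fun z _ => h z)⟩

lemma sup_indicator_add [Nonempty β] [DecidableEq α] (c : β → α) (R : β → ℕ) (a : α) :
    univ.sup (fun y => (if c y = a then 1 else 0) + R y)
      = univ.sup R + if a ∈ (maximizers R).image c then 1 else 0 := by
  have hR : ∀ y, R y ≤ univ.sup R := fun y => le_sup (mem_univ y)
  apply le_antisymm
  · refine Finset.sup_le fun y _ => ?_
    have hy : c y = a → R y = univ.sup R → a ∈ (maximizers R).image c := fun hc hm =>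
      mem_image.2 ⟨y, by simpa [maximizers] using hm, hc⟩
    have := hR y
    split_ifs at hy ⊢ <;> grind
  · split_ifs with ha
    · obtain ⟨y, hy, rfl⟩ := mem_image.1 ha
      have hy : R y = univ.sup R := by simpa [maximizers] using hy
      exact (le_of_eq (by rw [if_pos rfl, hy, add_comm])).trans
        (le_sup (f := fun z => (if c z = c y then 1 else 0) + R z) (mem_univ y))
    · obtain ⟨y, -, hy⟩ := exists_mem_eq_sup univ univ_nonempty R
      exact (by rw [hy]; omega : univ.sup R + 0 ≤ (if c y = a then 1 else 0) + R y).trans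
        (le_sup (f := fun z => (if c z = a then 1 else 0) + R z) (mem_univ y))

lemma sum_sup_indicator_add [Nonempty β] [Fintype α] [DecidableEq α] (c : β → α) (R : β → ℕ) :
    ∑ a, univ.sup (fun y => (if c y = a then 1 else 0) + R y)
      = Fintype.card α * univ.sup R + #((maximizers R).image c) := by
  simp only [sup_indicator_add, sum_add_distrib, sum_const, card_univ, smul_eq_mul, sum_ite_mem,
    univ_inter, mul_one]

lemma exists_ne_ne_of_two_lt_card [Fintype α] [DecidableEq α] (h : 2 < Fintype.card α) (a b : α) :
    ∃ c, c ≠ a ∧ c ≠ b := by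
  obtain ⟨c, -, hc⟩ := exists_mem_notMem_of_card_lt_card (s := {a, b}) (t := univ)
    ((card_le_two).trans_lt (by rwa [card_univ]))
  simp only [mem_insert, mem_singleton, not_or] at hc
  exact ⟨c, hc⟩

lemma exists_two_modes [Fintype α] [DecidableEq α] {κ : Type*} [Fintype κ] {y₁ y₂ : α}
    (h : y₁ ≠ y₂) (hκ : 2 ≤ Fintype.card κ) (hpar : Even (Fintype.card κ) ∨ 2 < Fintype.card α) :
    ∃ x : κ → α, y₁ ∈ maximizers (fun y => #{i | x i = y}) ∧
      y₂ ∈ maximizers (fun y => #{i | x i = y}) := by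
  set m := Fintype.card κ
  obtain ⟨y₃, hy₃⟩ : ∃ y₃, m % 2 = 1 → y₃ ≠ y₁ ∧ y₃ ≠ y₂ := by
    rcases hpar with hm | hα
    · exact ⟨y₁, fun hm' => by have := Nat.even_iff.1 hm; omega⟩
    · obtain ⟨y₃, hy₃⟩ := exists_ne_ne_of_two_lt_card hα y₁ y₂
      exact ⟨y₃, fun _ => hy₃⟩
  -- `m / 2` copies of `y₁` and of `y₂`, and one `y₃` if `m` is odd
  let e : κ ≃ Fin (m / 2) ⊕ Fin (m / 2) ⊕ Fin (m % 2) :=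
    Fintype.equivOfCardEq (by simp only [Fintype.card_sum, Fintype.card_fin]; omega)
  let w : Fin (m / 2) ⊕ Fin (m / 2) ⊕ Fin (m % 2) → α :=
    Sum.elim (fun _ => y₁) (Sum.elim (fun _ => y₂) fun _ => y₃)
  let x : κ → α := w ∘ e
  have hcount : ∀ y, #{i | x i = y} = (m / 2) * (if y₁ = y then 1 else 0) +
      ((m / 2) * (if y₂ = y then 1 else 0) + (m % 2) * (if y₃ = y then 1 else 0)) := by
    intro y
    refine (card_filter _ _).trans ((Equiv.sum_comp e fun s => if w s = y then 1 else 0).trans ?_)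
    rw [Fintype.sum_sum_type, Fintype.sum_sum_type]
    -- the decidability instances still mention the summation variable, which blocks `sum_const`
    show (∑ _ : Fin (m / 2), if y₁ = y then 1 else 0) +
      ((∑ _ : Fin (m / 2), if y₂ = y then 1 else 0) + ∑ _ : Fin (m % 2), if y₃ = y then 1 else 0) = _
    simp only [Finset.sum_const, Finset.card_univ, Fintype.card_fin, smul_eq_mul]
  refine ⟨x, ?_, ?_⟩ <;> refine mem_maximizers_iff.2 fun z => ?_ <;> simp only [hcount] <;>
    split_ifs <;> grind

end Maximizers

section Strategies

variable {n d : ℕ}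

def totalMaxSim (n d : ℕ) (g : Fin d → Fin n → Fin d) : ℕ := ∑ x, maxSim n d g x

lemma value_le_value_iff [NeZero n] [NeZero d] {f g : Fin d → Fin n → Fin d} :
    Value n d f ≤ Value n d g ↔ totalMaxSim n d f ≤ totalMaxSim n d g := by
  have hpos : (0 : ℚ) < n * d ^ n := by
    have := NeZero.pos n; have := NeZero.pos d; positivity
  simp only [Value, totalMaxSim, div_le_div_iff_of_pos_right hpos, ← Nat.cast_sum, Nat.cast_le]

def restSim (g : Fin d → Fin n → Fin d) (j₀ : Fin n) (x : {j // j ≠ j₀} → Fin d)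
    (y : Fin d) : ℕ :=
  #{j : {j // j ≠ j₀} | g y j = x j}

lemma sim_funSplitAt_symm (g : Fin d → Fin n → Fin d) (j₀ : Fin n) (y a : Fin d)
    (x : {j // j ≠ j₀} → Fin d) :
    Sim n d (g y) ((Equiv.funSplitAt j₀ (Fin d)).symm (a, x))
      = (if g y j₀ = a then 1 else 0) + restSim g j₀ x y := by
  rw [Sim, card_filter, Fintype.sum_eq_add_sum_subtype_ne _ j₀, restSim, card_filter]
  congr 1
  · simp
  · exact sum_congr rfl fun j _ => by simp [j.2]

lemma totalMaxSim_eq_sum [NeZero d] (g : Fin d → Fin n → Fin d) (j₀ : Fin n) :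
    totalMaxSim n d g = ∑ x : {j // j ≠ j₀} → Fin d,
      (d * univ.sup (restSim g j₀ x) + #((maximizers (restSim g j₀ x)).image fun y => g y j₀)) := by
  rw [totalMaxSim, ← (Equiv.funSplitAt j₀ (Fin d)).symm.sum_comp, Fintype.sum_prod_type,
    sum_comm]
  refine sum_congr rfl fun x _ => ?_
  simp only [maxSim, sim_funSplitAt_symm]
  rw [sum_sup_indicator_add, Fintype.card_fin]

def setColumnId (g : Fin d → Fin n → Fin d) (j₀ : Fin n) : Fin d → Fin n → Fin d :=
  fun y => Function.update (g y) j₀ y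

lemma restSim_setColumnId (g : Fin d → Fin n → Fin d) (j₀ : Fin n) :
    restSim (setColumnId g j₀) j₀ = restSim g j₀ := by
  ext x y
  refine congrArg card (filter_congr fun j _ => ?_)
  rw [setColumnId, Function.update_of_ne j.2]

lemma totalMaxSim_setColumnId [NeZero d] (g : Fin d → Fin n → Fin d) (j₀ : Fin n) :
    totalMaxSim n d (setColumnId g j₀) = ∑ x : {j // j ≠ j₀} → Fin d,
      (d * univ.sup (restSim g j₀ x) + #(maximizers (restSim g j₀ x))) := by
  simp [totalMaxSim_eq_sum _ j₀, restSim_setColumnId, setColumnId]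

lemma totalMaxSim_le_setColumnId [NeZero d] (g : Fin d → Fin n → Fin d) (j₀ : Fin n) :
    totalMaxSim n d g ≤ totalMaxSim n d (setColumnId g j₀) := by
  rw [totalMaxSim_eq_sum g j₀, totalMaxSim_setColumnId]
  exact sum_le_sum fun x _ => Nat.add_le_add_left card_image_le _

lemma totalMaxSim_setColumnId_of_injective [NeZero d] {g : Fin d → Fin n → Fin d} {j₀ : Fin n}
    (hg : Function.Injective fun y => g y j₀) :
    totalMaxSim n d (setColumnId g j₀) = totalMaxSim n d g := by
  rw [totalMaxSim_eq_sum g j₀, totalMaxSim_setColumnId]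
  exact sum_congr rfl fun x _ => by rw [card_image_of_injective _ hg]

lemma totalMaxSim_lt_setColumnId [NeZero d] {g : Fin d → Fin n → Fin d} {j₀ : Fin n}
    (x : {j // j ≠ j₀} → Fin d) (hx : ¬ Set.InjOn (fun y => g y j₀) (maximizers (restSim g j₀ x))) :
    totalMaxSim n d g < totalMaxSim n d (setColumnId g j₀) := by
  rw [totalMaxSim_eq_sum g j₀, totalMaxSim_setColumnId]
  refine sum_lt_sum (fun x _ => Nat.add_le_add_left card_image_le _) ⟨x, mem_univ x, ?_⟩
  exact Nat.add_lt_add_left (card_image_le.lt_of_ne (mt card_image_iff.1 hx)) _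

def setColumnsId (g : Fin d → Fin n → Fin d) (T : Finset (Fin n)) : Fin d → Fin n → Fin d :=
  fun y j => if j ∈ T then y else g y j

lemma setColumnsId_empty (g : Fin d → Fin n → Fin d) : setColumnsId g ∅ = g := by
  funext y j
  simp [setColumnsId]

lemma setColumnsId_univ (g : Fin d → Fin n → Fin d) : setColumnsId g univ = fun y _ => y := by
  funext y j
  simp [setColumnsId]

lemma setColumnsId_insert (g : Fin d → Fin n → Fin d) (T : Finset (Fin n)) (j₀ : Fin n) :
    setColumnsId g (insert j₀ T) = setColumnId (setColumnsId g T) j₀ := by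
  ext y j
  by_cases h : j = j₀ <;> simp [setColumnsId, setColumnId, h]

lemma totalMaxSim_le_setColumnsId [NeZero d] (g : Fin d → Fin n → Fin d) (T : Finset (Fin n)) :
    totalMaxSim n d g ≤ totalMaxSim n d (setColumnsId g T) := by
  induction T using Finset.induction_on with
  | empty => rw [setColumnsId_empty]
  | insert j T _ ih =>
    rw [setColumnsId_insert]
    exact ih.trans (totalMaxSim_le_setColumnId _ j)

lemma totalMaxSim_setColumnsId_of_property1 [NeZero d] {g : Fin d → Fin n → Fin d}
    (hg : Property1 n d g) (T : Finset (Fin n)) :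
    totalMaxSim n d (setColumnsId g T) = totalMaxSim n d g := by
  induction T using Finset.induction_on with
  | empty => rw [setColumnsId_empty]
  | insert j T hj ih =>
    rw [setColumnsId_insert, totalMaxSim_setColumnId_of_injective, ih]
    simpa [setColumnsId, hj] using hg j

lemma totalMaxSim_le_id [NeZero d] (g : Fin d → Fin n → Fin d) :
    totalMaxSim n d g ≤ totalMaxSim n d (fun y _ => y) :=
  setColumnsId_univ g ▸ totalMaxSim_le_setColumnsId g univ

lemma totalMaxSim_id_of_property1 [NeZero d] {g : Fin d → Fin n → Fin d} (hg : Property1 n d g) :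
    totalMaxSim n d (fun y _ => y) = totalMaxSim n d g :=
  setColumnsId_univ g ▸ totalMaxSim_setColumnsId_of_property1 hg univ

lemma totalMaxSim_lt_id_of_not_property1 [NeZero d] (hn : 2 < n) (hnd : 2 < d ∨ Odd n)
    {g : Fin d → Fin n → Fin d} (hg : ¬ Property1 n d g) :
    totalMaxSim n d g < totalMaxSim n d (fun y _ => y) := by
  obtain ⟨j₀, hj₀⟩ := not_forall.1 hg
  obtain ⟨y₁, y₂, hcol, hne⟩ := Function.not_injective_iff.1 hj₀
  set g' := setColumnsId g (univ.erase j₀)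
  have hrest : ∀ x, restSim g' j₀ x = fun y => #{j | x j = y} := fun x => by
    ext y
    refine congrArg card (filter_congr fun j _ => ?_)
    simp [g', setColumnsId, j.2, eq_comm]
  have hcard : Fintype.card {j // j ≠ j₀} = n - 1 := by simp [Fintype.card_subtype_compl]
  obtain ⟨x, h₁, h₂⟩ := exists_two_modes (κ := {j // j ≠ j₀}) hne (by omega) <| by
    rw [hcard, Fintype.card_fin]
    exact hnd.symm.imp (fun ⟨k, hk⟩ => ⟨k, by omega⟩) id
  have hid : setColumnId g' j₀ = fun y _ => y := by
    ext y j
    by_cases h : j = j₀ <;> simp [g', setColumnId, setColumnsId, h]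
  calc totalMaxSim n d g ≤ totalMaxSim n d g' := totalMaxSim_le_setColumnsId g _
    _ < totalMaxSim n d (setColumnId g' j₀) := by
      refine totalMaxSim_lt_setColumnId x fun hinj => hne (hinj ?_ ?_ ?_)
      · rwa [hrest]
      · rwa [hrest]
      · simpa [g', setColumnsId] using hcol
    _ = _ := by rw [hid]

end Strategies

/-- If `n > 2` and either `d > 2` or `n` is odd, a deterministic
strategy is optimal iff it satisfies Property 1. -/
theorem stmt_2 (n d : ℕ) (hn : 2 < n) (hd : 2 ≤ d) (h : 2 < d ∨ Odd n)
    (g : Fin d → Fin n → Fin d) :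
    IsOptimal n d g ↔ Property1 n d g := by
  have : NeZero n := ⟨by omega⟩
  have : NeZero d := ⟨by omega⟩
  refine ⟨fun hopt => ?_, fun hg f => ?_⟩
  · by_contra hg
    exact (totalMaxSim_lt_id_of_not_property1 hn h hg).not_ge (value_le_value_iff.1 (hopt _))
  · rw [value_le_value_iff, ← totalMaxSim_id_of_property1 hg]
    exact totalMaxSim_le_id f
end

section
/- Suppose n > 2 and either d > 2 or n is odd. Let g be a strategy satisfying Property 1, let j : Fin n be an index and y₁ ≠ y₂ be two messages. Let f be the strategy obtained from g by changing the single entry g y₁ j to the value g y₂ j (all other entries unchanged). Then Value(f) < Value(g). -/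
open Finset

/-!
Rows other than `y₁` are the same in `f` and `g`, and row `y₁` changes only at column `j`, from
`b = g y₁ j` to `a = g y₂ j`. Pair each word `x` with `x j = a` with `x' = x[j ↦ b]`: under `f`
the similarity `S` of row `y₁` goes up by one on `x` and down by one on `x'`. By Property 1 no
other row has `b` at column `j`, so the best other row `M` does at least as well on `x` as on `x'`;
hence a pair never gains, and it loses exactly when `M x' ≤ S x < M x`.

Property 1 makes the similarity of row `y` with the word `k ↦ g (v k) k` the number of positions
where `v` votes for `y`. A losing pair therefore comes from a vote giving `y₂` (including `j`) one
position more than `y₁` and every other row at most as many as `y₁`; splitting `n` this way needs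
`n` odd, or a third row to take the one position left over, which it may since `n > 2`.
-/

open Function

theorem Finset.exists_card_fiber_eq {α β : Type*} [Fintype α] [Fintype β] [DecidableEq β]
    (c : β → ℕ) (hc : ∑ b, c b = Fintype.card α) : ∃ v : α → β, ∀ b, #{a | v a = b} = c b := by
  let e : α ≃ Σ b, Fin (c b) := Fintype.equivOfCardEq (by simp [hc])
  refine ⟨fun a => (e a).1, fun b => ?_⟩
  rw [← Fintype.card_subtype, Fintype.card_congr (e.subtypeEquiv (p := fun a => (e a).1 = b)
    (q := fun s => s.1 = b) fun _ => Iff.rfl)]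
  simp [Fintype.card_congr (Equiv.sigmaSubtype b)]

theorem Finset.card_filter_comp_perm {α β : Type*} [Fintype α] [DecidableEq β]
    (v : α → β) (σ : Equiv.Perm α) (b : β) : #{a | v (σ a) = b} = #{a | v a = b} := by
  simp only [← Fintype.card_subtype]
  exact Fintype.card_congr (σ.subtypeEquiv fun _ => Iff.rfl)

theorem Finset.exists_apply_eq_and_card_fiber_eq {α β : Type*} [Fintype α] [DecidableEq α]
    [Fintype β] [DecidableEq β] (c : β → ℕ) (hc : ∑ b, c b = Fintype.card α) (a₀ : α) {b₀ : β}
    (hb₀ : 0 < c b₀) : ∃ v : α → β, v a₀ = b₀ ∧ ∀ b, #{a | v a = b} = c b := by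
  obtain ⟨v, hv⟩ := exists_card_fiber_eq c hc
  obtain ⟨a₁, ha₁⟩ : ∃ a₁, v a₁ = b₀ := by
    obtain ⟨a₁, ha₁⟩ := card_pos.1 (hb₀.trans_eq (hv b₀).symm)
    exact ⟨a₁, (mem_filter.1 ha₁).2⟩
  refine ⟨v ∘ Equiv.swap a₀ a₁, by simp [ha₁], fun b => ?_⟩
  rw [← hv b]
  exact card_filter_comp_perm v _ b

theorem Finset.sum_lt_sum_of_involutive {α : Type*} [Fintype α] (σ : α → α)
    (hσ : Involutive σ) {F G : α → ℕ} (hle : ∀ x, F x + F (σ x) ≤ G x + G (σ x))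
    (hlt : ∃ x, F x + F (σ x) < G x + G (σ x)) : ∑ x, F x < ∑ x, G x := by
  have hsym : ∀ H : α → ℕ, ∑ x, (H x + H (σ x)) = 2 * ∑ x, H x := fun H => by
    rw [sum_add_distrib, two_mul, hσ.bijective.sum_comp H]
  have := sum_lt_sum (s := univ) (fun x _ => hle x) (by simpa using hlt)
  rw [hsym, hsym] at this
  omega

def swapAt {α β : Type*} [DecidableEq α] [DecidableEq β] (j : α) (a b : β) (x : α → β) : α → β :=
  update x j (Equiv.swap a b (x j))

section SwapAt

variable {α β : Type*} [DecidableEq α] [DecidableEq β] {j : α} {a b : β}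

lemma swapAt_involutive : Involutive (swapAt j a b) := fun x => by simp [swapAt]

lemma swapAt_of_eq_left {x : α → β} (hx : x j = a) : swapAt j a b x = update x j b := by
  simp [swapAt, hx]

lemma swapAt_of_ne {x : α → β} (ha : x j ≠ a) (hb : x j ≠ b) : swapAt j a b x = x := by
  simp [swapAt, Equiv.swap_apply_of_ne_of_ne ha hb]

end SwapAt

section Similarity

variable {n d : ℕ}

lemma Sim_comm (z x : Fin n → Fin d) : Sim n d z x = Sim n d x z := by
  simp only [Sim, eq_comm]

lemma Sim_update_add (z x : Fin n → Fin d) (j : Fin n) (c : Fin d) :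
    Sim n d (update z j c) x + (if z j = x j then 1 else 0) =
      Sim n d z x + (if c = x j then 1 else 0) := by
  simp only [Sim, card_filter]
  rw [← add_sum_erase _ _ (mem_univ j), ← add_sum_erase _ _ (mem_univ j),
    sum_congr rfl fun k hk => by rw [update_of_ne (ne_of_mem_erase hk)]]
  simp only [update_self]
  omega

lemma Sim_comp_eq_card {g : Fin d → Fin n → Fin d} (hp : Property1 n d g)
    (v : Fin n → Fin d) (y : Fin d) : Sim n d (g y) (fun k => g (v k) k) = #{k | v k = y} := by
  simp only [Sim, (hp _).eq_iff, eq_comm]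

end Similarity

lemma exists_vote_counts {n d : ℕ} (hn : 2 < n) (h : 2 < d ∨ Odd n) (j : Fin n) {y₁ y₂ : Fin d}
    (hy : y₁ ≠ y₂) : ∃ (v : Fin n → Fin d) (m : ℕ), v j = y₂ ∧ #{k | v k = y₁} = m ∧
      #{k | v k = y₂} = m + 1 ∧ ∀ y, y ≠ y₁ → y ≠ y₂ → #{k | v k = y} ≤ m := by
  set m := (n - 1) / 2
  set r := (n - 1) % 2
  obtain ⟨y₃, hy₃⟩ : ∃ y₃, r = 0 ∨ y₃ ≠ y₁ ∧ y₃ ≠ y₂ := by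
    rcases h with hd | ⟨t, rfl⟩
    · obtain ⟨y₃, hy₃⟩ : ({y₁, y₂}ᶜ : Finset (Fin d)).Nonempty := by
        rw [← card_pos, card_compl, Fintype.card_fin]
        have := card_le_two (a := y₁) (b := y₂)
        omega
      exact ⟨y₃, Or.inr (by simpa [not_or] using hy₃)⟩
    · exact ⟨y₁, Or.inl (by omega)⟩
  let c : Fin d → ℕ := Pi.single y₁ m + Pi.single y₂ (m + 1) + Pi.single y₃ r
  have hc : ∑ y, c y = Fintype.card (Fin n) := by
    simp only [c, Pi.add_apply, sum_add_distrib, sum_pi_single', mem_univ, if_true,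
      Fintype.card_fin]
    omega
  obtain ⟨v, hvj, hv⟩ := exists_apply_eq_and_card_fiber_eq c hc j (b₀ := y₂) (by simp [c, hy.symm])
  have hm : 1 ≤ m ∧ r ≤ 1 := by omega
  refine ⟨v, m, hvj, ?_, ?_, fun y h₁ h₂ => ?_⟩ <;> rw [hv] <;>
    simp only [c, Pi.add_apply, Pi.single_apply]
  · simp only [if_neg hy, ↓reduceIte]; split_ifs <;> omega
  · simp only [if_neg hy.symm, ↓reduceIte]; split_ifs <;> omega
  · simp only [if_neg h₁, if_neg h₂]; split_ifs <;> omega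

section Strategy

variable {n d : ℕ}

def maxSimErase (g : Fin d → Fin n → Fin d) (y₁ : Fin d) (x : Fin n → Fin d) : ℕ :=
  (univ.erase y₁).sup fun y => Sim n d (g y) x

lemma maxSim_eq_max_maxSimErase (g : Fin d → Fin n → Fin d) (y₁ : Fin d) (x : Fin n → Fin d) :
    maxSim n d g x = max (Sim n d (g y₁) x) (maxSimErase g y₁ x) := by
  rw [maxSim, ← insert_erase (mem_univ y₁), sup_insert]
  rfl

lemma maxSimErase_update (g : Fin d → Fin n → Fin d) (y₁ : Fin d) (r : Fin n → Fin d)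
    (x : Fin n → Fin d) : maxSimErase (update g y₁ r) y₁ x = maxSimErase g y₁ x :=
  sup_congr rfl fun y hy => by rw [update_of_ne (ne_of_mem_erase hy)]

def overwrite (g : Fin d → Fin n → Fin d) (y₁ : Fin d) (j : Fin n) (c : Fin d) :
    Fin d → Fin n → Fin d :=
  update g y₁ (update (g y₁) j c)

lemma overwrite_eq_ite (g : Fin d → Fin n → Fin d) (y₁ : Fin d) (j : Fin n) (c : Fin d) :
    overwrite g y₁ j c = fun y j' => if y = y₁ ∧ j' = j then c else g y j' := by
  ext y k
  by_cases hy : y = y₁ <;> by_cases hk : k = j <;> simp [overwrite, hy, hk]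

lemma maxSim_overwrite_add {g : Fin d → Fin n → Fin d} (hp : Property1 n d g) {j : Fin n}
    {y₁ y₂ : Fin d} (hy : y₁ ≠ y₂) {x : Fin n → Fin d} (hx : x j = g y₂ j) :
    maxSim n d (overwrite g y₁ j (g y₂ j)) x +
        maxSim n d (overwrite g y₁ j (g y₂ j)) (update x j (g y₁ j)) +
        (if maxSimErase g y₁ (update x j (g y₁ j)) ≤ Sim n d (g y₁) x ∧
          Sim n d (g y₁) x < maxSimErase g y₁ x then 1 else 0) =
      maxSim n d g x + maxSim n d g (update x j (g y₁ j)) := by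
  set x' := update x j (g y₁ j) with hx'
  have hx'j : x' j = g y₁ j := update_self ..
  have hab : g y₂ j ≠ g y₁ j := fun h => hy (hp j h).symm
  have hS₁ := Sim_update_add (g y₁) x j (g y₂ j)
  have hS₂ := Sim_update_add x (g y₁) j (g y₁ j)
  have hS₃ := Sim_update_add (g y₁) x' j (g y₂ j)
  rw [Sim_comm, Sim_comm x, ← hx'] at hS₂
  simp only [hx, hx'j, hab, hab.symm, if_true, if_false] at hS₁ hS₂ hS₃
  have hM : maxSimErase g y₁ x' ≤ maxSimErase g y₁ x := sup_mono_fun fun y hy => by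
    have hS := Sim_update_add x (g y) j (g y₁ j)
    have hne : g y₁ j ≠ g y j := fun h => (ne_of_mem_erase hy) (hp j h).symm
    rw [Sim_comm, Sim_comm x, ← hx'] at hS
    simp only [hne, if_false] at hS
    omega
  simp only [maxSim_eq_max_maxSimErase _ y₁, overwrite, maxSimErase_update, update_self]
  split_ifs <;> omega

lemma maxSim_overwrite_add_le {g : Fin d → Fin n → Fin d} (hp : Property1 n d g) {j : Fin n}
    {y₁ y₂ : Fin d} (hy : y₁ ≠ y₂) (x : Fin n → Fin d) :
    maxSim n d (overwrite g y₁ j (g y₂ j)) x +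
        maxSim n d (overwrite g y₁ j (g y₂ j)) (swapAt j (g y₂ j) (g y₁ j) x) ≤
      maxSim n d g x + maxSim n d g (swapAt j (g y₂ j) (g y₁ j) x) := by
  by_cases ha : x j = g y₂ j
  · rw [swapAt_of_eq_left ha, ← maxSim_overwrite_add hp hy ha]
    exact Nat.le_add_right _ _
  by_cases hb : x j = g y₁ j
  · have hσx : swapAt j (g y₂ j) (g y₁ j) x j = g y₂ j := by simp [swapAt, hb]
    have := maxSim_overwrite_add hp hy hσx
    rw [← swapAt_of_eq_left hσx, swapAt_involutive x] at this
    omega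
  · rw [swapAt_of_ne ha hb]
    have hSim := Sim_update_add (g y₁) x j (g y₂ j)
    simp only [Ne.symm ha, Ne.symm hb, if_false, add_zero] at hSim
    simp only [maxSim_eq_max_maxSimErase _ y₁, overwrite, maxSimErase_update, update_self, hSim,
      le_refl]

lemma exists_maxSim_overwrite_add_lt {g : Fin d → Fin n → Fin d} (hp : Property1 n d g)
    {j : Fin n} {y₁ y₂ : Fin d} (hy : y₁ ≠ y₂) {v : Fin n → Fin d} {m : ℕ} (hvj : v j = y₂)
    (hv₁ : #{k | v k = y₁} = m) (hv₂ : #{k | v k = y₂} = m + 1)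
    (hv : ∀ y, y ≠ y₁ → y ≠ y₂ → #{k | v k = y} ≤ m) :
    ∃ x, maxSim n d (overwrite g y₁ j (g y₂ j)) x +
        maxSim n d (overwrite g y₁ j (g y₂ j)) (swapAt j (g y₂ j) (g y₁ j) x) <
      maxSim n d g x + maxSim n d g (swapAt j (g y₂ j) (g y₁ j) x) := by
  set u : Fin n → Fin d := fun k => g (v k) k
  have hu : u j = g y₂ j := by simp [u, hvj]
  refine ⟨u, ?_⟩
  have hS : Sim n d (g y₁) u = m := (Sim_comp_eq_card hp v y₁).trans hv₁
  have hM : m < maxSimErase g y₁ u := by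
    have := le_sup (f := fun y => Sim n d (g y) u) (mem_erase.2 ⟨hy.symm, mem_univ y₂⟩)
    rw [Sim_comp_eq_card hp v y₂, hv₂] at this
    exact this
  have hM' : maxSimErase g y₁ (update u j (g y₁ j)) ≤ m := Finset.sup_le fun y hy => by
    have hS := Sim_update_add u (g y) j (g y₁ j)
    have hne : g y₁ j ≠ g y j := fun h => (ne_of_mem_erase hy) (hp j h).symm
    rw [Sim_comm, Sim_comm u, Sim_comp_eq_card hp v y, hu] at hS
    simp only [hne, (hp j).eq_iff, if_false] at hS
    by_cases hy₂ : y₂ = y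
    · subst hy₂; simp only [if_true] at hS; omega
    · have := hv y (ne_of_mem_erase hy) (Ne.symm hy₂)
      simp only [hy₂, if_false] at hS
      omega
  have := maxSim_overwrite_add hp hy hu
  rw [if_pos ⟨hS ▸ hM', hS ▸ hM⟩] at this
  rw [swapAt_of_eq_left hu]
  omega

end Strategy

theorem stmt_6_general (n d : ℕ) (hn : 2 < n) (h : 2 < d ∨ Odd n)
    (g : Fin d → Fin n → Fin d) (hp : Property1 n d g)
    (j : Fin n) (y₁ y₂ : Fin d) (hy : y₁ ≠ y₂)
    (f : Fin d → Fin n → Fin d)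
    (hf : f = fun y j' => if y = y₁ ∧ j' = j then g y₂ j else g y j') :
    Value n d f < Value n d g := by
  obtain ⟨v, m, hvj, hv₁, hv₂, hv⟩ := exists_vote_counts hn h j hy
  have hsum := sum_lt_sum_of_involutive _ swapAt_involutive (maxSim_overwrite_add_le hp hy)
    (exists_maxSim_overwrite_add_lt hp hy hvj hv₁ hv₂ hv)
  have hpos : (0 : ℚ) < n * d ^ n := by
    have := j.pos
    have := y₁.pos
    positivity
  rw [hf, ← overwrite_eq_ite]
  exact div_lt_div_of_pos_right (by exact_mod_cast hsum) hpos

/-- Lemma 3: for `n > 2` with `d > 2` or `n` odd, any strategy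
with Property 1 strictly suffers from overwriting the entry `g y₁ j` with the
value `g y₂ j`. -/
theorem stmt_6 (n d : ℕ) (hn : 2 < n) (hd : 2 ≤ d) (h : 2 < d ∨ Odd n)
    (g : Fin d → Fin n → Fin d) (hp : Property1 n d g)
    (j : Fin n) (y₁ y₂ : Fin d) (hy : y₁ ≠ y₂)
    (f : Fin d → Fin n → Fin d)
    (hf : f = fun y j' => if y = y₁ ∧ j' = j then g y₂ j else g y j') :
    Value n d f < Value n d g :=
  stmt_6_general n d hn h g hp j y₁ y₂ hy f hf
end

section
/- Let n = 2 and d ≥ 2. Then every strategy g satisfying Property 2 is optimal, and moreover for every strategy f not satisfying Property 2 and every strategy g satisfying Property 2 one has Value(f) < Value(g). -/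
open Finset

/-!
With two questions, the best similarity of a word `x` with a row of `g` is
`[x agrees with some row in some position] + [x is a row]`, so the numerator of the value is
`#(covered words) + #(rows) ≤ d ^ 2 + d`. An injective column is surjective, hence covers every
word and makes the rows distinct: equality. If both columns fail to be injective, each misses
some letter, and the word formed by the two missing letters is not covered: strict inequality.
-/

variable {n d : ℕ}

theorem sim_le (z x : Fin n → Fin d) : Sim n d z x ≤ n :=
  (card_le_univ _).trans_eq (Fintype.card_fin n)

theorem sim_eq_iff {z x : Fin n → Fin d} : Sim n d z x = n ↔ z = x := by
  conv_lhs => rhs; rw [← Fintype.card_fin n, ← card_univ]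
  rw [Sim, card_filter_eq_iff, funext_iff]
  simp only [mem_univ, true_implies]

theorem sim_pos_iff {z x : Fin n → Fin d} : 0 < Sim n d z x ↔ ∃ j, z j = x j := by
  rw [Sim, card_pos, filter_nonempty_iff]
  simp only [mem_univ, true_and]

def coveredWords (g : Fin d → Fin n → Fin d) : Finset (Fin n → Fin d) :=
  univ.filter fun x => ∃ y j, g y j = x j

theorem maxSim_le (g : Fin d → Fin n → Fin d) (x : Fin n → Fin d) : maxSim n d g x ≤ n :=
  Finset.sup_le fun y _ => sim_le (g y) x

theorem maxSim_pos_iff {g : Fin d → Fin n → Fin d} {x : Fin n → Fin d} :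
    0 < maxSim n d g x ↔ x ∈ coveredWords g := by
  simp only [maxSim, Finset.lt_sup_iff, sim_pos_iff, coveredWords, mem_filter, mem_univ,
    true_and]

theorem maxSim_eq_iff (hn : 0 < n) {g : Fin d → Fin n → Fin d} {x : Fin n → Fin d} :
    maxSim n d g x = n ↔ x ∈ image g univ := by
  rw [(maxSim_le g x).ge_iff_eq.symm, maxSim, Finset.le_sup_iff hn]
  simp only [mem_univ, true_and, mem_image, (sim_le _ x).ge_iff_eq, sim_eq_iff]

theorem maxSim_two (g : Fin d → Fin 2 → Fin d) (x : Fin 2 → Fin d) :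
    maxSim 2 d g x =
      (if x ∈ coveredWords g then 1 else 0) + (if x ∈ image g univ then 1 else 0) := by
  have hle := maxSim_le g x
  have hpos : 0 < maxSim 2 d g x ↔ x ∈ coveredWords g := maxSim_pos_iff
  have htop : maxSim 2 d g x = 2 ↔ x ∈ image g univ := maxSim_eq_iff two_pos
  by_cases hc : x ∈ coveredWords g <;> by_cases hi : x ∈ image g univ <;>
    simp only [hc, hi, iff_true, iff_false, if_true, if_false] at hpos htop ⊢ <;> omega

theorem sum_maxSim_two (g : Fin d → Fin 2 → Fin d) :
    ∑ x, maxSim 2 d g x = #(coveredWords g) + #(image g univ) := by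
  simp only [maxSim_two, sum_add_distrib, sum_boole, Nat.cast_id, filter_mem_eq_inter,
    univ_inter]

theorem coveredWords_eq_univ {g : Fin d → Fin n → Fin d} {j : Fin n}
    (hj : Function.Injective fun y => g y j) : coveredWords g = univ :=
  eq_univ_of_forall fun x =>
    let ⟨y, hy⟩ := Finite.injective_iff_surjective.1 hj (x j)
    mem_filter.2 ⟨mem_univ x, y, j, hy⟩

theorem card_coveredWords_lt {g : Fin d → Fin n → Fin d}
    (hg : ∀ j, ¬ Function.Injective fun y => g y j) : #(coveredWords g) < d ^ n := by
  have hmiss : ∀ j, ∃ u, ∀ y, g y j ≠ u := fun j => by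
    simpa [Function.Surjective] using mt Finite.injective_iff_surjective.2 (hg j)
  choose u hu using hmiss
  have hu_not_covered : u ∉ coveredWords g := by
    simp only [coveredWords, mem_filter, mem_univ, true_and, not_exists]
    exact fun y j => hu j y
  simpa using card_lt_univ_of_notMem hu_not_covered

theorem property2_two_iff {g : Fin d → Fin 2 → Fin d} :
    Property2 2 d g ↔
      Function.Injective (fun y => g y 0) ∨ Function.Injective (fun y => g y 1) := by
  constructor
  · intro hg
    by_contra h
    rw [not_or] at h
    exact zero_ne_one (hg 0 1 h.1 h.2)
  · rintro h j₁ j₂ h₁ h₂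
    fin_cases j₁ <;> fin_cases j₂ <;> simp_all

theorem sum_maxSim_two_le (g : Fin d → Fin 2 → Fin d) : ∑ x, maxSim 2 d g x ≤ d ^ 2 + d := by
  rw [sum_maxSim_two]
  gcongr
  · simpa using card_le_univ (coveredWords g)
  · simpa using card_image_le (f := g) (s := univ)

theorem sum_maxSim_two_of_property2 {g : Fin d → Fin 2 → Fin d} (hg : Property2 2 d g) :
    ∑ x, maxSim 2 d g x = d ^ 2 + d := by
  obtain ⟨j, hj⟩ : ∃ j : Fin 2, Function.Injective fun y => g y j := by
    simpa [Fin.exists_fin_two] using property2_two_iff.1 hg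
  have hg_inj : Function.Injective g := fun y y' h => hj (congrFun h j)
  rw [sum_maxSim_two, coveredWords_eq_univ hj, card_image_of_injective _ hg_inj]
  simp

theorem sum_maxSim_two_lt_of_not_property2 {g : Fin d → Fin 2 → Fin d}
    (hg : ¬ Property2 2 d g) : ∑ x, maxSim 2 d g x < d ^ 2 + d := by
  have hcols : ∀ j : Fin 2, ¬ Function.Injective fun y => g y j := by
    simpa [property2_two_iff, Fin.forall_fin_two] using hg
  rw [sum_maxSim_two]
  have hcovered := card_coveredWords_lt hcols
  have hrows := card_image_le (f := g) (s := univ)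
  rw [card_univ, Fintype.card_fin] at hrows
  omega

theorem value_le_value {f g : Fin d → Fin n → Fin d}
    (h : ∑ x, maxSim n d f x ≤ ∑ x, maxSim n d g x) : Value n d f ≤ Value n d g := by
  unfold Value
  apply div_le_div_of_nonneg_right _ (by positivity)
  exact_mod_cast h

theorem value_lt_value (hn : 0 < n) (hd : 0 < d) {f g : Fin d → Fin n → Fin d}
    (h : ∑ x, maxSim n d f x < ∑ x, maxSim n d g x) : Value n d f < Value n d g := by
  unfold Value
  apply div_lt_div_of_pos_right _ (by positivity)
  exact_mod_cast h

theorem stmt_7_general (d : ℕ) :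
    (∀ g : Fin d → Fin 2 → Fin d, Property2 2 d g → IsOptimal 2 d g) ∧
    (∀ f g : Fin d → Fin 2 → Fin d, ¬ Property2 2 d f → Property2 2 d g →
      Value 2 d f < Value 2 d g) := by
  refine ⟨fun g hg f => value_le_value ?_, fun f g hf hg => ?_⟩
  · exact (sum_maxSim_two_le f).trans (sum_maxSim_two_of_property2 hg).ge
  · have hlt := sum_maxSim_two_lt_of_not_property2 hf
    have hd : 0 < d := Nat.pos_of_ne_zero fun h => by simp [h] at hlt
    exact value_lt_value two_pos hd (hlt.trans_eq (sum_maxSim_two_of_property2 hg).symm)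

/-- Lemma 4: for `n = 2`, every strategy with Property 2 is
optimal and strictly better than every strategy without Property 2. -/
theorem stmt_7 (d : ℕ) (hd : 2 ≤ d) :
    (∀ g : Fin d → Fin 2 → Fin d, Property2 2 d g → IsOptimal 2 d g) ∧
    (∀ f g : Fin d → Fin 2 → Fin d, ¬ Property2 2 d f → Property2 2 d g →
      Value 2 d f < Value 2 d g) :=
  stmt_7_general d
end

section
/- Let d = 2 and let n > 2 be even. Then every strategy g satisfying Property 2 is optimal, and moreover for every strategy f not satisfying Property 2 and every strategy g satisfying Property 2 one has Value(f) < Value(g). -/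
open Finset

/-!
Write `a = g 0` and `b = g 1` for the two rows of the decoding matrix. On a column where `a` and
`b` agree, both rows score alike against every word; on a column where they differ, exactly one
of them matches. Splitting the coordinates accordingly, the total score `2 * ∑ x, maxSim g x`
depends only on the number `k` of agreeing columns and equals `k * 2 ^ n + 2 ^ (k + 1) * M (n - k)`,
where `M m` sums `max (#zeros, #ones)` over binary words of length `m`. Since
`M (m + 1) = 2 * M m + 2 ^ m + B m` with `B m` the number of balanced words, lowering `k` by one
gains `2 ^ (k + 1) * B (n - k - 1)`, which vanishes when `n - k - 1` is odd and is positive when it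
is even. For even `n` the score is therefore the same for `k = 0, 1` and strictly smaller for
`k ≥ 2`.
-/

section AgreeCount

variable {α β : Type*} [Fintype α] [DecidableEq β]

def agreeCount (c w : α → β) : ℕ := #{a | c a = w a}

lemma agreeCount_add_add [AddGroup β] (c w t : α → β) :
    agreeCount (c + t) (w + t) = agreeCount c w := by
  simp only [agreeCount, Pi.add_apply, add_left_inj]

lemma agreeCount_comp_equiv {α' : Type*} [Fintype α'] (e : α' ≃ α)
    (c w : α → β) : agreeCount (c ∘ e) (w ∘ e) = agreeCount c w := by
  simp only [agreeCount, card_filter, Function.comp_apply]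
  exact e.sum_comp fun a => if c a = w a then 1 else 0

lemma agreeCount_eq_restrict_add_restrict (p : α → Prop) [DecidablePred p] (c w : α → β) :
    agreeCount c w = agreeCount (Subtype.restrict p c) (Subtype.restrict p w)
      + agreeCount (Subtype.restrict (¬ p ·) c) (Subtype.restrict (¬ p ·) w) := by
  simp only [agreeCount, card_filter]
  exact (Fintype.sum_subtype_add_sum_subtype p _).symm

lemma agreeCount_const_cons {m : ℕ} (c t : β) (v : Fin m → β) :
    agreeCount (fun _ => c) (Fin.cons t v : Fin (m + 1) → β)
      = (if c = t then 1 else 0) + agreeCount (fun _ => c) v := by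
  simp only [agreeCount, card_filter]
  exact Fin.sum_univ_succ _

lemma agreeCount_add_agreeCount_add_one (c w : α → Fin 2) :
    agreeCount c w + agreeCount (c + 1) w = Fintype.card α := by
  have hflip : ∀ t u : Fin 2, t + 1 = u ↔ ¬ t = u := by decide
  simp only [agreeCount, Pi.add_apply, Pi.one_apply, hflip]
  exact card_filter_add_card_filter_not _

variable [DecidableEq α]

lemma two_mul_sum_agreeCount (c : α → Fin 2) :
    2 * ∑ w, agreeCount c w = Fintype.card α * 2 ^ Fintype.card α := by
  have hshift : ∑ w, agreeCount c w = ∑ w, agreeCount (c + 1) w :=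
    Fintype.sum_equiv (Equiv.addRight 1) _ _ fun w => (agreeCount_add_add c w 1).symm
  rw [two_mul]
  nth_rw 2 [hshift]
  simp only [← sum_add_distrib, agreeCount_add_agreeCount_add_one, sum_const, card_univ,
    Fintype.card_fun, Fintype.card_fin, smul_eq_mul, mul_comm]

end AgreeCount

section Majority

def majoritySum (m : ℕ) : ℕ := ∑ v : Fin m → Fin 2, max (agreeCount 0 v) (agreeCount 1 v)

def balancedCount (m : ℕ) : ℕ := #{v : Fin m → Fin 2 | agreeCount 0 v = agreeCount 1 v}

lemma sum_max_agreeCount_add_one {α : Type*} [Fintype α] [DecidableEq α] (c : α → Fin 2) :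
    ∑ v, max (agreeCount c v) (agreeCount (c + 1) v) = majoritySum (Fintype.card α) := by
  have htranslate : ∑ v, max (agreeCount c v) (agreeCount (c + 1) v)
      = ∑ v : α → Fin 2, max (agreeCount 0 v) (agreeCount 1 v) := by
    refine (Fintype.sum_equiv (Equiv.addRight c) _ _ fun v => ?_).symm
    rw [Equiv.coe_addRight, ← agreeCount_add_add 0 v c, ← agreeCount_add_add 1 v c, zero_add,
      add_comm 1 c]
  let e := Fintype.equivFin α
  rw [htranslate, majoritySum]
  refine Fintype.sum_equiv (e.arrowCongr (Equiv.refl _)) _ _ fun v => ?_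
  rw [← agreeCount_comp_equiv e.symm 0 v, ← agreeCount_comp_equiv e.symm 1 v]
  rfl

lemma majoritySum_succ (m : ℕ) :
    majoritySum (m + 1) = 2 * majoritySum m + 2 ^ m + balancedCount m := by
  have hcolumn : ∀ v : Fin m → Fin 2,
      ∑ t : Fin 2, max (agreeCount 0 (Fin.cons t v : Fin (m + 1) → Fin 2))
          (agreeCount 1 (Fin.cons t v : Fin (m + 1) → Fin 2))
        = 2 * max (agreeCount 0 v) (agreeCount 1 v) + 1
          + if agreeCount 0 v = agreeCount 1 v then 1 else 0 := by
    intro v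
    simp only [Fin.sum_univ_two, Pi.zero_def, Pi.one_def, agreeCount_const_cons, if_true,
      zero_ne_one, one_ne_zero, if_false]
    split_ifs <;> omega
  calc majoritySum (m + 1)
      = ∑ v : Fin m → Fin 2, ∑ t : Fin 2,
          max (agreeCount 0 (Fin.cons t v : Fin (m + 1) → Fin 2))
            (agreeCount 1 (Fin.cons t v : Fin (m + 1) → Fin 2)) := by
        rw [majoritySum, ← (Fin.consEquiv fun _ => Fin 2).sum_comp, Fintype.sum_prod_type,
          sum_comm]
        rfl
    _ = ∑ v : Fin m → Fin 2, (2 * max (agreeCount 0 v) (agreeCount 1 v) + 1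
          + if agreeCount 0 v = agreeCount 1 v then 1 else 0) := sum_congr rfl fun v _ => hcolumn v
    _ = 2 * majoritySum m + 2 ^ m + balancedCount m := by
        rw [balancedCount, card_filter, sum_add_distrib, sum_add_distrib, majoritySum, mul_sum]
        simp

lemma balancedCount_eq_zero {m : ℕ} (hm : Odd m) : balancedCount m = 0 := by
  refine card_eq_zero.2 (filter_eq_empty_iff.2 fun v _ hv => ?_)
  have hsum := agreeCount_add_agreeCount_add_one 0 v
  rw [zero_add, Fintype.card_fin] at hsum
  exact Nat.not_even_iff_odd.2 hm ⟨agreeCount 0 v, by omega⟩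

lemma exists_balanced_word (r : ℕ) :
    ∃ v : Fin (2 * r) → Fin 2, agreeCount 0 v = agreeCount 1 v := by
  induction r with
  | zero => exact ⟨0, rfl⟩
  | succ r ih =>
    obtain ⟨v, hv⟩ := ih
    refine ⟨Fin.cons 0 (Fin.cons 1 v), ?_⟩
    change agreeCount (fun _ => 0) (Fin.cons 0 (Fin.cons 1 v) : Fin (2 * r + 1 + 1) → Fin 2)
      = agreeCount (fun _ => 1) (Fin.cons 0 (Fin.cons 1 v) : Fin (2 * r + 1 + 1) → Fin 2)
    simp only [Pi.zero_def, Pi.one_def, agreeCount_const_cons, if_true, zero_ne_one, one_ne_zero,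
      if_false] at hv ⊢
    omega

lemma balancedCount_pos {m : ℕ} (hm : Even m) : 0 < balancedCount m := by
  obtain ⟨r, rfl⟩ := hm
  obtain ⟨v, hv⟩ := exists_balanced_word r
  rw [← two_mul]
  exact card_pos.2 ⟨v, mem_filter.2 ⟨mem_univ v, hv⟩⟩

end Majority

section PairScore

def pairScore (n k : ℕ) : ℕ := k * 2 ^ n + 2 ^ (k + 1) * majoritySum (n - k)

lemma pairScore_eq_add {n k : ℕ} (h : k < n) :
    pairScore n k = pairScore n (k + 1) + 2 ^ (k + 1) * balancedCount (n - (k + 1)) := by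
  have hpow : 2 ^ (k + 1) * 2 ^ (n - (k + 1)) = 2 ^ n := by rw [mul_comm, Nat.pow_sub_mul_pow 2 h]
  rw [pairScore, pairScore, show n - k = n - (k + 1) + 1 by omega, majoritySum_succ]
  linear_combination hpow

lemma pairScore_le_of_le {n k l : ℕ} (hkl : k ≤ l) (hl : l ≤ n) :
    pairScore n l ≤ pairScore n k := by
  induction l, hkl using Nat.le_induction with
  | base => exact le_rfl
  | succ l _ ih =>
    rw [pairScore_eq_add (by omega : l < n)] at ih
    omega

lemma pairScore_eq_pairScore_zero {n k : ℕ} (hn : Even n) (hk : k ≤ 1) (hkn : k ≤ n) :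
    pairScore n k = pairScore n 0 := by
  interval_cases k
  · rfl
  · have h := pairScore_eq_add (by omega : 0 < n)
    simp only [zero_add, balancedCount_eq_zero (Nat.Even.sub_odd hkn hn odd_one), mul_zero,
      add_zero] at h
    exact h.symm

lemma pairScore_two_lt_one {n : ℕ} (hn : Even n) (h2 : 2 ≤ n) :
    pairScore n 2 < pairScore n 1 := by
  rw [pairScore_eq_add (by omega : 1 < n)]
  have hbalanced : Even (n - 2) := (Nat.even_sub h2).2 (iff_of_true hn even_two)
  exact Nat.lt_add_of_pos_right (Nat.mul_pos (by positivity) (balancedCount_pos hbalanced))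

end PairScore

section RowPair

variable {ι : Type*} [Fintype ι] (p : ι → Prop) [DecidablePred p]

lemma max_agreeCount_eq {a b : ι → Fin 2} (hP : ∀ j, p j → b j = a j)
    (hQ : ∀ j, ¬ p j → b j = a j + 1) (x : ι → Fin 2) :
    max (agreeCount a x) (agreeCount b x)
      = agreeCount (Subtype.restrict p a) (Subtype.restrict p x)
        + max (agreeCount (Subtype.restrict (¬ p ·) a) (Subtype.restrict (¬ p ·) x))
          (agreeCount (Subtype.restrict (¬ p ·) a + 1) (Subtype.restrict (¬ p ·) x)) := by
  have hbP : Subtype.restrict p b = Subtype.restrict p a := funext fun j => hP j j.2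
  have hbQ : Subtype.restrict (¬ p ·) b = Subtype.restrict (¬ p ·) a + 1 :=
    funext fun j => hQ j j.2
  rw [agreeCount_eq_restrict_add_restrict p a, agreeCount_eq_restrict_add_restrict p b, hbP, hbQ,
    max_add_add_left]

variable [DecidableEq ι]

lemma sum_restrict_add_restrict {β : Type*} [Fintype β]
    (f : ({j // p j} → β) → ℕ) (g : ({j // ¬ p j} → β) → ℕ) :
    ∑ x : ι → β, (f (Subtype.restrict p x) + g (Subtype.restrict (¬ p ·) x))
      = Fintype.card β ^ Fintype.card {j // ¬ p j} * ∑ u, f u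
        + Fintype.card β ^ Fintype.card {j // p j} * ∑ v, g v := by
  rw [Fintype.sum_equiv (Equiv.piEquivPiSubtypeProd p fun _ => β)
    (fun x => f (Subtype.restrict p x) + g (Subtype.restrict (¬ p ·) x))
    (fun uv => f uv.1 + g uv.2) fun _ => rfl, Fintype.sum_prod_type]
  simp only [sum_add_distrib, sum_const, card_univ, Fintype.card_fun, smul_eq_mul, ← mul_sum]

omit p in
lemma two_mul_sum_max_agreeCount (a b : ι → Fin 2) :
    2 * ∑ x, max (agreeCount a x) (agreeCount b x)
      = pairScore (Fintype.card ι) #{j | a j = b j} := by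
  have hflip : ∀ s t : Fin 2, ¬ s = t → t = s + 1 := by decide
  have hP := Fintype.card_subtype (fun j => a j = b j)
  have hQ := Fintype.card_subtype_compl (fun j => a j = b j)
  have hle : #{j | a j = b j} ≤ Fintype.card ι := card_le_univ _
  rw [sum_congr rfl fun x _ => max_agreeCount_eq (fun j => a j = b j) (fun j h => h.symm)
    (fun j h => hflip _ _ h) x,
    sum_restrict_add_restrict _ (agreeCount (Subtype.restrict _ a)) fun v =>
      max (agreeCount (Subtype.restrict _ a) v) (agreeCount (Subtype.restrict _ a + 1) v),
    sum_max_agreeCount_add_one, mul_add, mul_left_comm, two_mul_sum_agreeCount, hQ, hP,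
    Fintype.card_fin, pairScore, ← Nat.pow_sub_mul_pow 2 hle]
  ring

end RowPair

lemma injective_fin_two_iff {α : Type*} (f : Fin 2 → α) :
    Function.Injective f ↔ f 0 ≠ f 1 := by
  refine ⟨fun h e => zero_ne_one (h e), fun h i j hij => ?_⟩
  fin_cases i <;> fin_cases j <;> simp_all [eq_comm]

section Strategy

variable {n : ℕ}

lemma property2_iff_card_le_one (g : Fin 2 → Fin n → Fin 2) :
    Property2 n 2 g ↔ #{j | g 0 j = g 1 j} ≤ 1 := by
  simp only [Property2, injective_fin_two_iff, not_not, card_le_one, mem_filter,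
    mem_univ, true_and]
  exact ⟨fun h a ha b hb => h a b ha hb, fun h a b ha hb => h a ha b hb⟩

lemma maxSim_eq (g : Fin 2 → Fin n → Fin 2) (x : Fin n → Fin 2) :
    maxSim n 2 g x = max (agreeCount (g 0) x) (agreeCount (g 1) x) := by
  simp [maxSim, Sim, agreeCount, Fin.univ_succ]

lemma value_eq (g : Fin 2 → Fin n → Fin 2) :
    Value n 2 g = pairScore n #{j | g 0 j = g 1 j} / (2 * (n * 2 ^ n)) := by
  have h := two_mul_sum_max_agreeCount (g 0) (g 1)
  rw [Fintype.card_fin, ← sum_congr rfl fun x _ => maxSim_eq g x] at h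
  rw [Value, ← h]
  push_cast
  rw [mul_div_mul_left _ _ two_ne_zero]

end Strategy

theorem stmt_8_general (n : ℕ) (hne : Even n) :
    (∀ g : Fin 2 → Fin n → Fin 2, Property2 n 2 g → IsOptimal n 2 g) ∧
    (∀ f g : Fin 2 → Fin n → Fin 2, ¬ Property2 n 2 f → Property2 n 2 g →
      Value n 2 f < Value n 2 g) := by
  have hle (g : Fin 2 → Fin n → Fin 2) : #{j | g 0 j = g 1 j} ≤ n :=
    (card_le_univ _).trans_eq (Fintype.card_fin n)
  have hscore {g : Fin 2 → Fin n → Fin 2} (hg : Property2 n 2 g) :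
      pairScore n #{j | g 0 j = g 1 j} = pairScore n 0 :=
    pairScore_eq_pairScore_zero hne ((property2_iff_card_le_one g).1 hg) (hle g)
  refine ⟨fun g hg f => ?_, fun f g hf hg => ?_⟩
  · rw [value_eq, value_eq, hscore hg]
    gcongr
    exact pairScore_le_of_le (Nat.zero_le _) (hle f)
  · have h2 : 2 ≤ #{j | f 0 j = f 1 j} := by
      rw [property2_iff_card_le_one] at hf
      omega
    rw [value_eq, value_eq, hscore hg]
    have hn2 : 2 ≤ n := h2.trans (hle f)
    have hn : (0 : ℚ) < n := by exact_mod_cast (by omega : 0 < n)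
    refine div_lt_div_of_pos_right ?_ (by positivity)
    exact_mod_cast calc pairScore n #{j | f 0 j = f 1 j}
        _ ≤ pairScore n 2 := pairScore_le_of_le h2 (hle f)
        _ < pairScore n 1 := pairScore_two_lt_one hne hn2
        _ = pairScore n 0 := pairScore_eq_pairScore_zero hne le_rfl (by omega)

/-- Lemma 5: for `d = 2` and even `n > 2`, every strategy with
Property 2 is optimal and strictly better than every strategy without
Property 2. -/
theorem stmt_8 (n : ℕ) (hn : 2 < n) (hne : Even n) :
    (∀ g : Fin 2 → Fin n → Fin 2, Property2 n 2 g → IsOptimal n 2 g) ∧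
    (∀ f g : Fin 2 → Fin n → Fin 2, ¬ Property2 n 2 f → Property2 n 2 g →
      Value n 2 f < Value n 2 g) :=
  stmt_8_general n hne
end
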